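/- If the points z_k = e^{i 2πk/N} for k ∈ {0,…,N−1} are evenly spaced on S¹ (so Δ_i = 2π/N for all i), then E[(1 − max_k Re(Z* z_k))²] = 3/2 + (N/(4π))( sin(2π/N) − 8 sin(π/N) ), and this quantity is O(1/N⁴) as N → ∞. -/

import Mathlib

/-!
The nearest grid point to `θ` realises the maximum of `cos (2πk/N - θ)`, so `θ ↦ (1 - gmax θ)²`
has period `2π/N` and equals `(1 - cos θ)²` on `[-π/N, π/N]`. The average is therefore
`(N/2π) ∫_{-π/N}^{π/N} (1 - cos θ)² dθ`, which is elementary. With `δ = π/N` the result reads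
`(N/4π)(sin 2δ - 8 sin δ + 6δ)`; the Taylor terms of order `δ` and `δ³` cancel, leaving
`N · O(δ⁵) = O(N⁻⁴)`.
-/

open MeasureTheory Real

noncomputable section

/-- `G_max(θ) := max_k Re( conj(e^{iθ}) z_k )` where `z_k = e^{i t_k}`. -/
def gmax (N : ℕ) (t : Fin N → ℝ) (θ : ℝ) : ℝ :=
  ⨆ k : Fin N,
    ((starRingEnd ℂ) (Complex.exp (θ * Complex.I)) * Complex.exp ((t k : ℂ) * Complex.I)).re

/-- Evenly spaced points `t_k = 2πk/N`. -/
def teven (N : ℕ) : Fin N → ℝ := fun k => 2 * π * k / N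

/-- The resulting expected squared gap, as a function of `N`. -/
def evalN (N : ℕ) : ℝ :=
  3 / 2 + ((N : ℝ) / (4 * π)) * (Real.sin (2 * π / N) - 8 * Real.sin (π / N))

theorem gmax_eq_iSup_cos (N : ℕ) (t : Fin N → ℝ) (θ : ℝ) :
    gmax N t θ = ⨆ k, cos (t k - θ) := by
  refine iSup_congr fun k => ?_
  rw [← Complex.exp_conj, ← Complex.exp_add, map_mul, Complex.conj_ofReal, Complex.conj_I,
    ← Complex.exp_ofReal_mul_I_re (t k - θ)]
  push_cast
  ring_nf

theorem cos_add_two_pi_mul_div_le {N : ℕ} (hN : 0 < N) {u : ℝ} (hu : |u| ≤ π / N) (m : ℤ) :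
    cos (u + 2 * π * m / N) ≤ cos u := by
  set q := toIocDiv two_pi_pos (-π) (u + 2 * π * m / N)
  have hy := toIocMod_mem_Ioc two_pi_pos (-π) (u + 2 * π * m / N)
  rw [← self_sub_toIocDiv_zsmul, zsmul_eq_mul] at hy
  have hyu : u + 2 * π * m / N - q * (2 * π) = u + 2 * π * (m - q * N : ℤ) / N := by
    push_cast
    field_simp
    ring
  rw [← cos_sub_int_mul_two_pi _ q, hyu]
  rw [hyu] at hy
  set m' := m - q * N
  rcases eq_or_ne m' 0 with hm' | hm'
  · simp [hm']
  -- a nonzero multiple of `2π/N` moves `u` out of `[-π/N, π/N]`, where `cos` is largest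
  have hm'_one : (1 : ℝ) ≤ |(m' : ℝ)| := by exact_mod_cast Int.one_le_abs hm'
  have hshift : 2 * π / N ≤ |2 * π * m' / N| := by
    rw [abs_div, abs_mul, abs_of_pos two_pi_pos, Nat.abs_cast]
    exact div_le_div_of_nonneg_right (le_mul_of_one_le_right two_pi_pos.le hm'_one) N.cast_nonneg
  have hsplit : 2 * π / N = π / N + π / N := by ring
  have hyle : |u + 2 * π * m' / N| ≤ π := abs_le.2 ⟨hy.1.le, by linarith [hy.2]⟩
  have hge : |u| ≤ |u + 2 * π * m' / N| := by
    have := abs_sub_abs_le_abs_sub (2 * π * m' / N) (-u)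
    rw [abs_neg, sub_neg_eq_add, add_comm] at this
    linarith
  rw [← cos_abs u, ← cos_abs (u + _)]
  exact cos_le_cos_of_nonneg_of_le_pi (abs_nonneg u) hyle hge

theorem cos_two_pi_mul_mod_div_sub (N n : ℕ) (θ : ℝ) :
    cos (2 * π * (n % N : ℕ) / N - θ) = cos (2 * π * n / N - θ) := by
  rcases eq_or_ne N 0 with rfl | hN
  · simp
  have hn : 2 * π * n / N - θ = 2 * π * (n % N : ℕ) / N - θ + (n / N : ℕ) * (2 * π) := by
    conv_lhs => rw [← Nat.mod_add_div n N]
    push_cast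
    field_simp
    ring
  rw [hn, cos_add_nat_mul_two_pi]

theorem periodic_gmax_teven (N : ℕ) [NeZero N] :
    Function.Periodic (gmax N (teven N)) (2 * π / N) := by
  intro θ
  simp only [gmax_eq_iSup_cos]
  rw [← (Equiv.addRight (1 : Fin N)).iSup_comp]
  refine iSup_congr fun k => ?_
  have hk : ((k + 1 : Fin N) : ℕ) = (k + 1) % N := by simp [Fin.val_add]
  rw [Equiv.coe_addRight, teven, hk, cos_two_pi_mul_mod_div_sub, teven]
  push_cast
  ring_nf

theorem gmax_teven_of_abs_le {N : ℕ} (hN : 0 < N) {θ : ℝ} (hθ : |θ| ≤ π / N) :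
    gmax N (teven N) θ = cos θ := by
  have : Nonempty (Fin N) := ⟨⟨0, hN⟩⟩
  rw [gmax_eq_iSup_cos]
  refine le_antisymm (ciSup_le fun k => ?_) ?_
  · calc cos (teven N k - θ) = cos (-θ + 2 * π * ((k : ℕ) : ℤ) / N) := by
          rw [teven]; push_cast; ring_nf
      _ ≤ cos θ := by simpa using cos_add_two_pi_mul_div_le hN (u := -θ) (by rwa [abs_neg]) k
  · refine le_of_eq_of_le ?_ (le_ciSup (Set.finite_range _).bddAbove ⟨0, hN⟩)
    rw [teven]
    simp

theorem integral_one_sub_cos_sq (δ : ℝ) :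
    ∫ u in -δ..δ, (1 - cos u) ^ 2 = 3 * δ - 4 * sin δ + sin δ * cos δ := by
  have hexpand : (fun u => (1 - cos u) ^ 2) = fun u => (1 - 2 * cos u) + cos u ^ 2 := by
    ext u; ring
  have hcont {f : ℝ → ℝ} (hf : Continuous f) : IntervalIntegrable f volume (-δ) δ :=
    hf.intervalIntegrable _ _
  rw [hexpand, intervalIntegral.integral_add (hcont (by fun_prop)) (hcont (by fun_prop)),
    intervalIntegral.integral_sub (hcont (by fun_prop)) (hcont (by fun_prop)),
    intervalIntegral.integral_const_mul, integral_cos, integral_cos_sq]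
  simp only [intervalIntegral.integral_const, sin_neg, cos_neg, smul_eq_mul]
  ring

theorem integral_sq_one_sub_gmax_teven {N : ℕ} (hN : 0 < N) :
    ∫ θ in (0 : ℝ)..2 * π, (1 - gmax N (teven N) θ) ^ 2 =
      N * (3 * (π / N) - 4 * sin (π / N) + sin (π / N) * cos (π / N)) := by
  have : NeZero N := NeZero.of_pos hN
  set δ := π / N
  set g := fun θ => (1 - gmax N (teven N) θ) ^ 2
  have hper : Function.Periodic g (2 * δ) := by
    simpa [g, δ, mul_div_assoc] using
      (periodic_gmax_teven N).comp fun x => (1 - x) ^ 2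
  have hcos : Set.EqOn g (fun θ => (1 - cos θ) ^ 2) (Set.uIcc (-δ) δ) := fun θ hθ => by
    rw [Set.uIcc_of_le (neg_le_self (by positivity))] at hθ
    simp only [g, gmax_teven_of_abs_le hN (abs_le.2 hθ)]
  have hδ : -δ + 2 * δ = δ := by ring
  have hint : ∀ a b, IntervalIntegrable g volume a b := by
    refine hper.intervalIntegrable (t := -δ) (by positivity) ?_
    rw [hδ, intervalIntegrable_congr (hcos.mono Set.uIoc_subset_uIcc)]
    exact (by fun_prop : Continuous fun θ => (1 - cos θ) ^ 2).intervalIntegrable _ _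
  calc ∫ θ in (0 : ℝ)..2 * π, g θ = ∫ θ in (0 : ℝ)..0 + (N : ℤ) • (2 * δ), g θ := by
        congr 1; simp only [δ, zsmul_eq_mul, Int.cast_natCast]; field_simp; ring
    _ = N * ∫ θ in (0 : ℝ)..0 + 2 * δ, g θ := by
        rw [hper.intervalIntegral_add_zsmul_eq N 0 hint, zsmul_eq_mul, Int.cast_natCast]
    _ = N * ∫ θ in -δ..δ, (1 - cos θ) ^ 2 := by
        rw [hper.intervalIntegral_add_eq 0 (-δ), hδ, intervalIntegral.integral_congr hcos]
    _ = _ := by rw [integral_one_sub_cos_sq]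

theorem average_sq_one_sub_gmax_teven {N : ℕ} (hN : 0 < N) :
    (1 / (2 * π)) * ∫ θ in Set.Ico (0 : ℝ) (2 * π), (1 - gmax N (teven N) θ) ^ 2 = evalN N := by
  rw [setIntegral_congr_set Ico_ae_eq_Ioc, ← intervalIntegral.integral_of_le two_pi_pos.le,
    integral_sq_one_sub_gmax_teven hN, evalN, show 2 * π / N = 2 * (π / N) by ring, sin_two_mul]
  field_simp
  ring

theorem abs_sin_two_mul_sub_eight_sin_add_le {x : ℝ} (hx : |x| ≤ 1 / 2) :
    |sin (2 * x) - 8 * sin x + 6 * x| ≤ 2 / 5 * |x| ^ 5 := by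
  have hsplit : sin (2 * x) - 8 * sin x + 6 * x =
      (sin (2 * x) - (2 * x - (2 * x) ^ 3 / 6)) - 8 * (sin x - (x - x ^ 3 / 6)) := by ring
  have h2x := sin_bound (x := 2 * x) (by rw [abs_mul, abs_two]; linarith)
  have hx1 := sin_bound (x := x) (by linarith)
  rw [abs_mul, abs_two] at h2x
  rw [hsplit]
  calc _ ≤ |sin (2 * x) - (2 * x - (2 * x) ^ 3 / 6)| + |8 * (sin x - (x - x ^ 3 / 6))| :=
        abs_sub _ _
    _ ≤ (2 * |x|) ^ 5 / 100 + 8 * (|x| ^ 5 / 100) := by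
        rw [abs_mul, abs_of_pos (by norm_num : (0 : ℝ) < 8)]
        gcongr
    _ = 2 / 5 * |x| ^ 5 := by ring

theorem evalN_eq {N : ℕ} (hN : N ≠ 0) :
    evalN N = N / (4 * π) * (sin (2 * (π / N)) - 8 * sin (π / N) + 6 * (π / N)) := by
  rw [evalN, mul_div_assoc]
  field_simp
  ring

theorem abs_evalN_le {N : ℕ} (hN : 8 ≤ N) : |evalN N| ≤ π ^ 4 / 10 * (1 / (N : ℝ) ^ 4) := by
  have hNR : (8 : ℝ) ≤ N := by exact_mod_cast hN
  have hδ : |π / N| ≤ 1 / 2 := by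
    rw [abs_of_pos (by positivity), div_le_iff₀ (by positivity)]
    linarith [pi_le_four]
  rw [evalN_eq (by omega), abs_mul, abs_of_pos (by positivity)]
  calc _ ≤ N / (4 * π) * (2 / 5 * |π / N| ^ 5) := by
        gcongr
        exact abs_sin_two_mul_sub_eight_sin_add_le hδ
    _ = π ^ 4 / 10 * (1 / (N : ℝ) ^ 4) := by
        rw [abs_of_pos (by positivity)]
        field_simp
        ring

theorem evalN_isBigO : evalN =O[Filter.atTop] fun N : ℕ => 1 / (N : ℝ) ^ 4 := by
  refine Asymptotics.IsBigO.of_bound (π ^ 4 / 10) ?_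
  filter_upwards [Filter.eventually_ge_atTop 8] with N hN
  rw [norm_eq_abs, norm_eq_abs, abs_of_nonneg (by positivity : (0 : ℝ) ≤ 1 / (N : ℝ) ^ 4)]
  exact abs_evalN_le hN

/-- for evenly spaced `z_k = e^{2πik/N}`,
`E[(1 − max_k Re(Z* z_k))²] = 3/2 + (N/(4π))(sin(2π/N) − 8 sin(π/N))`,
and this quantity is `O(1/N⁴)` as `N → ∞`. -/
theorem stmt12 :
    (∀ N : ℕ, 0 < N →
      (1 / (2 * π)) * ∫ θ in Set.Ico (0 : ℝ) (2 * π), (1 - gmax N (teven N) θ) ^ 2 =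
        evalN N) ∧
    evalN =O[Filter.atTop] fun N : ℕ => 1 / (N : ℝ) ^ 4 :=
  ⟨fun _ hN => average_sq_one_sub_gmax_teven hN, evalN_isBigO⟩
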